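/- Let H be a finite-dimensional complex Hilbert space, 𝒱 a subgroup of the unitary group of H, and X_1, …, X_n skewadjoint operators on H such that exp(c_1 X_1 + ⋯ + c_n X_n) ∈ 𝒱 for all real numbers c_1, …, c_n. Then for all real numbers b^1, …, b^n and every positive semidefinite symmetric real n×n matrix [a^{jk}], the linear map 𝔊 : End(H) → End(H) defined by 𝔊(A) = Σ_{j=1}^{n} b^j (X_j A − A X_j) + Σ_{j,k=1}^{n} a^{jk} (X_j X_k A + A X_j X_k − 2 X_j A X_k) belongs to C(𝒱), the closure of the convex cone generated by {(A ↦ V A V* − A) : V ∈ 𝒱} in the space of linear maps on End(H). -/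

import Mathlib

/-- Conjugation `A ↦ V A V*` by an operator `V`, as a continuous linear map on `End(H)`. -/
noncomputable def conjCLM {H : Type*} [NormedAddCommGroup H] [InnerProductSpace ℂ H]
    [FiniteDimensional ℂ H] (V : H →L[ℂ] H) :
    (H →L[ℂ] H) →L[ℂ] (H →L[ℂ] H) :=
  ContinuousLinearMap.mulLeftRight ℂ (H →L[ℂ] H) V (star V)

/-- The convex cone generated by a set `S` in a real vector space: the set of nonnegative
multiples of elements of the convex hull of `S`. -/
def coneGen {M : Type*} [AddCommMonoid M] [Module ℝ M] (S : Set M) : Set M :=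
  {x | ∃ r : ℝ, 0 ≤ r ∧ ∃ y ∈ convexHull ℝ S, x = r • y}

/-!
Write `a = Cᴴ C`, `Yₘ = ∑ⱼ Cₘⱼ Xⱼ`, `B = ∑ⱼ bʲ Xⱼ` and `ad Y = [Y, ·]`; then
`𝔊 = ad B + ∑ₘ (ad Yₘ)²`. For every real combination `Z` of the `Xⱼ`, `exp (ad Z)` is
conjugation by the unitary `exp Z` (as `Z* = -Z`), so `exp (t ad Z) - 1` is a generator of the
cone for every real `t`. In the closed cone `ad Z` is the limit of `t⁻¹ (exp (t ad Z) - 1)` as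
`t → 0⁺`, and `(ad Z)²` the limit of `u⁻² ((exp (u ad Z) - 1) + (exp (-u ad Z) - 1))` as `u → 0`.
-/

open NormedSpace Filter Topology
open scoped Matrix

section ConeGen
variable {M : Type*} [AddCommGroup M] [Module ℝ M] {S : Set M}

theorem add_mem_coneGen {x y : M} (hx : x ∈ coneGen S) (hy : y ∈ coneGen S) :
    x + y ∈ coneGen S := by
  obtain ⟨r, hr, u, hu, rfl⟩ := hx
  obtain ⟨s, hs, v, hv, rfl⟩ := hy
  obtain rfl | hr := hr.eq_or_lt
  · exact ⟨s, hs, v, hv, by rw [zero_smul, zero_add]⟩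
  obtain rfl | hs := hs.eq_or_lt
  · exact ⟨r, hr.le, u, hu, by rw [zero_smul, add_zero]⟩
  have hull_iff := fun x => ConvexCone.mem_hull_of_convex (x := x) (convex_convexHull ℝ S)
  obtain ⟨c, hc, w, hw, h⟩ := (hull_iff _).1 <| add_mem
    ((hull_iff _).2 ⟨r, hr, Set.smul_mem_smul_set hu⟩)
    ((hull_iff _).2 ⟨s, hs, Set.smul_mem_smul_set hv⟩)
  exact ⟨c, hc.le, w, hw, h.symm⟩

theorem PointedCone.hull_subset_coneGen (hS : S.Nonempty) :
    (PointedCone.hull ℝ S : Set M) ⊆ coneGen S := by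
  intro x hx
  induction hx using Submodule.span_induction with
  | mem x hx => exact ⟨1, zero_le_one, x, subset_convexHull ℝ S hx, (one_smul ℝ x).symm⟩
  | zero =>
    obtain ⟨x, hx⟩ := hS
    exact ⟨0, le_rfl, x, subset_convexHull ℝ S hx, (zero_smul ℝ x).symm⟩
  | add x y _ _ hx hy => exact add_mem_coneGen hx hy
  | smul c x _ hx =>
    obtain ⟨r, hr, y, hy, rfl⟩ := hx
    exact ⟨c * r, mul_nonneg c.2 hr, y, hy, (smul_smul (c : ℝ) r y)⟩

end ConeGen

section Commutator
variable (𝕜 : Type*) {𝔸 : Type*} [RCLike 𝕜] [NormedRing 𝔸] [NormedAlgebra 𝕜 𝔸]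

noncomputable def commutatorCLM : 𝔸 →L[𝕜] 𝔸 →L[𝕜] 𝔸 :=
  ContinuousLinearMap.mul 𝕜 𝔸 - (ContinuousLinearMap.mul 𝕜 𝔸).flip

@[simp]
theorem commutatorCLM_apply (Y A : 𝔸) : commutatorCLM 𝕜 Y A = Y * A - A * Y := rfl

noncomputable def mulLeftRingHom : 𝔸 →+* (𝔸 →L[𝕜] 𝔸) where
  toFun := ContinuousLinearMap.mul 𝕜 𝔸
  map_one' := by ext; simp
  map_mul' _ _ := by ext; simp [mul_assoc]
  map_zero' := map_zero _
  map_add' := map_add _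

noncomputable def mulRightRingHom : 𝔸ᵐᵒᵖ →+* (𝔸 →L[𝕜] 𝔸) where
  toFun a := (ContinuousLinearMap.mul 𝕜 𝔸).flip a.unop
  map_one' := by ext; simp
  map_mul' _ _ := by ext; simp [mul_assoc]
  map_zero' := by ext; simp
  map_add' _ _ := by ext; simp

variable [CompleteSpace 𝔸]

theorem exp_commutatorCLM (Y : 𝔸) :
    exp (commutatorCLM 𝕜 Y) = ContinuousLinearMap.mulLeftRight 𝕜 𝔸 (exp Y) (exp (-Y)) := by
  let +nondep : NormedAlgebra ℚ 𝔸 := .restrictScalars ℚ 𝕜 𝔸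
  let +nondep : NormedAlgebra ℚ (𝔸 →L[𝕜] 𝔸) := .restrictScalars ℚ 𝕜 _
  have hsplit : commutatorCLM 𝕜 Y = mulLeftRingHom 𝕜 Y + mulRightRingHom 𝕜 (.op (-Y)) := by
    ext; simp [mulLeftRingHom, mulRightRingHom, sub_eq_add_neg]
  have hcomm : Commute (mulLeftRingHom 𝕜 Y) (mulRightRingHom 𝕜 (.op (-Y))) := by
    ext; simp [mulLeftRingHom, mulRightRingHom, mul_assoc]
  have hleft : Continuous (mulLeftRingHom 𝕜 (𝔸 := 𝔸)) := (ContinuousLinearMap.mul 𝕜 𝔸).continuous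
  have hright : Continuous (mulRightRingHom 𝕜 (𝔸 := 𝔸)) :=
    (ContinuousLinearMap.mul 𝕜 𝔸).flip.continuous.comp MulOpposite.continuous_unop
  rw [hsplit, exp_add_of_commute hcomm, ← map_exp _ hleft, ← map_exp _ hright, exp_op]
  ext; simp [mulLeftRingHom, mulRightRingHom, mul_assoc]

end Commutator

section Limits
variable {𝔸 : Type*} [NormedRing 𝔸] [NormedAlgebra ℝ 𝔸] [CompleteSpace 𝔸]

theorem tendsto_inv_smul_exp_smul_sub_one (D : 𝔸) :
    Tendsto (fun t : ℝ => t⁻¹ • (exp (t • D) - 1)) (𝓝[≠] 0) (𝓝 D) := by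
  have hD := hasDerivAt_exp_smul_const (𝕂 := ℝ) D 0
  rw [zero_smul, exp_zero, one_mul] at hD
  exact (hasDerivAt_iff_tendsto_slope.mp hD).congr fun t => by simp [slope_def_module]

theorem tendsto_inv_sq_smul_exp_add_exp_neg_sub_two (D : 𝔸) :
    Tendsto (fun u : ℝ => (u ^ 2)⁻¹ • (exp (u • D) + exp (-u • D) - 2)) (𝓝[≠] 0)
      (𝓝 (D * D)) := by
  let +nondep : NormedAlgebra ℚ 𝔸 := .restrictScalars ℚ ℝ 𝔸
  have hneg : Tendsto (fun u : ℝ => -u) (𝓝[≠] 0) (𝓝[≠] 0) :=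
    tendsto_nhdsWithin_of_tendsto_nhds_of_eventually_within _
      ((continuous_neg.tendsto' 0 0 neg_zero).mono_left nhdsWithin_le_nhds)
      (eventually_mem_nhdsWithin.mono fun u hu => neg_ne_zero.mpr hu)
  have hback : Tendsto (fun u : ℝ => u⁻¹ • (1 - exp (-u • D))) (𝓝[≠] 0) (𝓝 D) :=
    ((tendsto_inv_smul_exp_smul_sub_one D).comp hneg).congr fun u => by
      simp [inv_neg, neg_smul, ← smul_neg]
  refine ((tendsto_inv_smul_exp_smul_sub_one D).mul hback).congr fun u => ?_
  -- `(exp (u • D) - 1) * (1 - exp (-u • D))` telescopes since the two exponentials are inverse.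
  have hinv : exp (u • D) * exp (-u • D) = 1 := by
    rw [← exp_add_of_commute ((Commute.refl D).smul_left u |>.smul_right (-u)), neg_smul,
      add_neg_cancel, exp_zero]
  rw [smul_mul_smul_comm, ← sq, sub_mul, mul_sub, mul_sub, hinv, one_mul, mul_one, one_mul]
  congr 1
  · exact inv_pow u 2
  · rw [← one_add_one_eq_two]
    abel

theorem PointedCone.mem_of_forall_exp_smul_sub_one_mem {K : PointedCone ℝ 𝔸}
    (hK : IsClosed (K : Set 𝔸)) {D : 𝔸} (h : ∀ t : ℝ, exp (t • D) - 1 ∈ K) : D ∈ K :=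
  hK.mem_of_tendsto ((tendsto_inv_smul_exp_smul_sub_one D).mono_left
    (nhdsWithin_mono 0 fun _ ht => ne_of_gt ht : 𝓝[>] (0 : ℝ) ≤ 𝓝[≠] 0))
    (eventually_mem_nhdsWithin.mono fun t ht => K.smul_mem (inv_nonneg.mpr (le_of_lt ht)) (h t))

theorem PointedCone.mul_self_mem_of_forall_exp_smul_sub_one_mem {K : PointedCone ℝ 𝔸}
    (hK : IsClosed (K : Set 𝔸)) {D : 𝔸} (h : ∀ t : ℝ, exp (t • D) - 1 ∈ K) : D * D ∈ K := by
  refine hK.mem_of_tendsto (tendsto_inv_sq_smul_exp_add_exp_neg_sub_two D)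
    (Eventually.of_forall fun u => K.smul_mem (by positivity) ?_)
  rw [show exp (u • D) + exp (-u • D) - 2 = (exp (u • D) - 1) + (exp (-u • D) - 1) by
    rw [← one_add_one_eq_two]; abel]
  exact add_mem (h u) (h (-u))

end Limits

theorem LinearMap.sum_bilin_sum_smul_sum_smul {R M N ι κ : Type*} [CommSemiring R]
    [AddCommMonoid M] [Module R M] [AddCommMonoid N] [Module R N] [Fintype ι] [Fintype κ]
    (β : M →ₗ[R] M →ₗ[R] N) (C : ι → κ → R) (x : κ → M) :
    ∑ i, β (∑ j, C i j • x j) (∑ k, C i k • x k) =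
      ∑ j, ∑ k, (∑ i, C i j * C i k) • β (x j) (x k) := by
  simp only [map_sum, map_smul, LinearMap.sum_apply, LinearMap.smul_apply, Finset.smul_sum,
    smul_smul, Finset.sum_smul]
  rw [Finset.sum_comm]
  refine (Finset.sum_congr rfl fun k _ => Finset.sum_comm).trans ?_
  rw [Finset.sum_comm]
  simp only [mul_comm]

section Lindblad
variable {R 𝔸 : Type*} [CommSemiring R] [Ring 𝔸] [Module R 𝔸] [IsScalarTower R 𝔸 𝔸]
  [SMulCommClass R 𝔸 𝔸]

variable (R) in
def lindbladBilin (A : 𝔸) : 𝔸 →ₗ[R] 𝔸 →ₗ[R] 𝔸 :=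
  LinearMap.mk₂ R (fun Y Z => Y * Z * A + A * (Y * Z) - 2 • (Y * A * Z))
    (fun _ _ _ => by noncomm_ring)
    (fun _ _ _ => by
      simp only [smul_mul_assoc, mul_smul_comm, smul_sub, smul_add, smul_comm _ (2 : ℕ)])
    (fun _ _ _ => by noncomm_ring)
    (fun _ _ _ => by
      simp only [smul_mul_assoc, mul_smul_comm, smul_sub, smul_add, smul_comm _ (2 : ℕ)])

variable (R) in
theorem commutator_commutator_eq_lindbladBilin (Y A : 𝔸) :
    Y * (Y * A - A * Y) - (Y * A - A * Y) * Y = lindbladBilin R A Y Y := by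
  simp only [lindbladBilin, LinearMap.mk₂_apply]
  noncomm_ring

end Lindblad

open scoped ComplexOrder MatrixOrder in
theorem Matrix.PosSemidef.exists_eq_conjTranspose_mul_self {𝕜 n : Type*} [RCLike 𝕜] [Fintype n]
    [DecidableEq n] {A : Matrix n n 𝕜} (hA : A.PosSemidef) : ∃ B : Matrix n n 𝕜, A = Bᴴ * B :=
  CStarAlgebra.nonneg_iff_eq_star_mul_self.mp hA.nonneg

theorem commutatorCLM_add_sum_mul_self_apply {𝔸 ι κ : Type*} [NormedRing 𝔸] [NormedAlgebra ℂ 𝔸]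
    [Fintype ι] [Fintype κ] (X : κ → 𝔸) (b : κ → ℝ) (C : Matrix ι κ ℝ) (A : 𝔸) :
    (commutatorCLM ℂ (∑ j, b j • X j) +
        ∑ i, commutatorCLM ℂ (∑ j, C i j • X j) * commutatorCLM ℂ (∑ j, C i j • X j)) A =
      (∑ j, b j • (X j * A - A * X j)) + ∑ j, ∑ k, (Cᴴ * C) j k •
        (X j * X k * A + A * (X j * X k) - 2 • (X j * A * X k)) := by
  have hdrift : (∑ j, b j • X j) * A - A * ∑ j, b j • X j = ∑ j, b j • (X j * A - A * X j) := by
    simp only [Finset.sum_mul, Finset.mul_sum, smul_mul_assoc, mul_smul_comm, smul_sub,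
      Finset.sum_sub_distrib]
  have hcoeff (j k : κ) : (Cᴴ * C) j k = ∑ i, C i j * C i k := by
    simp [Matrix.mul_apply]
  simp only [add_apply, sum_apply, mul_apply_eq_comp, commutatorCLM_apply, hdrift,
    commutator_commutator_eq_lindbladBilin ℝ, hcoeff]
  rw [LinearMap.sum_bilin_sum_smul_sum_smul (lindbladBilin ℝ A) (fun i j => C i j) X]
  rfl

section ConjCone
variable {H : Type*} [NormedAddCommGroup H] [InnerProductSpace ℂ H] [FiniteDimensional ℂ H]
  {𝒱 : Set (H →L[ℂ] H)}

variable (𝒱) in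
/-- The cone `C(𝒱)` of the paper, as a pointed cone. -/
noncomputable def conjCone : PointedCone ℝ ((H →L[ℂ] H) →L[ℂ] (H →L[ℂ] H)) :=
  (PointedCone.hull ℝ {T | ∃ V ∈ 𝒱, T = conjCLM V - ContinuousLinearMap.id ℂ (H →L[ℂ] H)}).closure

theorem isClosed_conjCone : IsClosed (conjCone 𝒱 : Set ((H →L[ℂ] H) →L[ℂ] (H →L[ℂ] H))) := by
  rw [conjCone, PointedCone.coe_closure]
  exact isClosed_closure

theorem conjCone_subset_closure_coneGen (h𝒱 : 𝒱.Nonempty) :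
    (conjCone 𝒱 : Set ((H →L[ℂ] H) →L[ℂ] (H →L[ℂ] H))) ⊆
      closure (coneGen {T | ∃ V ∈ 𝒱, T = conjCLM V - ContinuousLinearMap.id ℂ (H →L[ℂ] H)}) := by
  obtain ⟨V, hV⟩ := h𝒱
  exact closure_mono (PointedCone.hull_subset_coneGen ⟨_, V, hV, rfl⟩)

theorem conjCLM_exp_sub_id {Z : H →L[ℂ] H} (hZ : star Z = -Z) :
    conjCLM (exp Z) - ContinuousLinearMap.id ℂ (H →L[ℂ] H) = exp (commutatorCLM ℂ Z) - 1 := by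
  have : CompleteSpace H := FiniteDimensional.complete ℂ H
  rw [exp_commutatorCLM, conjCLM, star_exp, hZ]
  rfl

variable {Z : H →L[ℂ] H}

theorem exp_smul_commutatorCLM_sub_one_mem_conjCone (hZ : star Z = -Z)
    (h𝒱 : ∀ t : ℝ, exp (t • Z) ∈ 𝒱) (t : ℝ) : exp (t • commutatorCLM ℂ Z) - 1 ∈ conjCone 𝒱 := by
  have htZ : star (t • Z) = -(t • Z) := by rw [star_smul, hZ, star_trivial, smul_neg]
  rw [← (commutatorCLM ℂ).map_smul_of_tower, ← conjCLM_exp_sub_id htZ]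
  exact subset_closure (PointedCone.subset_hull ⟨_, h𝒱 t, rfl⟩)

theorem commutatorCLM_mem_conjCone (hZ : star Z = -Z) (h𝒱 : ∀ t : ℝ, exp (t • Z) ∈ 𝒱) :
    commutatorCLM ℂ Z ∈ conjCone 𝒱 :=
  have : CompleteSpace H := FiniteDimensional.complete ℂ H
  PointedCone.mem_of_forall_exp_smul_sub_one_mem isClosed_conjCone
    (exp_smul_commutatorCLM_sub_one_mem_conjCone hZ h𝒱)

theorem commutatorCLM_mul_self_mem_conjCone (hZ : star Z = -Z)
    (h𝒱 : ∀ t : ℝ, exp (t • Z) ∈ 𝒱) : commutatorCLM ℂ Z * commutatorCLM ℂ Z ∈ conjCone 𝒱 :=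
  have : CompleteSpace H := FiniteDimensional.complete ℂ H
  PointedCone.mul_self_mem_of_forall_exp_smul_sub_one_mem isClosed_conjCone
    (exp_smul_commutatorCLM_sub_one_mem_conjCone hZ h𝒱)

end ConjCone

theorem gaussian_generator_mem_cone_general
    {H : Type*} [NormedAddCommGroup H] [InnerProductSpace ℂ H] [FiniteDimensional ℂ H]
    (𝒱 : Set (H →L[ℂ] H))
    (n : ℕ) (X : Fin n → (H →L[ℂ] H))
    (hskew : ∀ j, star (X j) = -X j)
    (hexp : ∀ c : Fin n → ℝ, NormedSpace.exp (∑ j, c j • X j) ∈ 𝒱)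
    (b : Fin n → ℝ) (a : Matrix (Fin n) (Fin n) ℝ)
    (hpos : a.PosSemidef) :
    ∃ T ∈ closure (coneGen
        {T | ∃ V ∈ 𝒱, T = conjCLM V - ContinuousLinearMap.id ℂ (H →L[ℂ] H)}),
      ∀ A : H →L[ℂ] H,
        T A = (∑ j, b j • (X j * A - A * X j))
          + ∑ j, ∑ k, a j k •
              (X j * X k * A + A * (X j * X k) - 2 • (X j * A * X k)) := by
  have : CompleteSpace H := FiniteDimensional.complete ℂ H
  obtain ⟨C, rfl⟩ := hpos.exists_eq_conjTranspose_mul_self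
  have hgen (c : Fin n → ℝ) : star (∑ j, c j • X j) = -∑ j, c j • X j ∧
      ∀ t : ℝ, exp (t • ∑ j, c j • X j) ∈ 𝒱 := by
    refine ⟨by simp [star_sum, hskew], fun t => ?_⟩
    simpa only [Finset.smul_sum, smul_smul] using hexp fun j => t * c j
  refine ⟨_, conjCone_subset_closure_coneGen ⟨_, hexp 0⟩ <| add_mem
    (commutatorCLM_mem_conjCone (hgen b).1 (hgen b).2)
    (sum_mem fun m _ => commutatorCLM_mul_self_mem_conjCone (hgen (C m)).1 (hgen (C m)).2),
    commutatorCLM_add_sum_mul_self_apply X b C⟩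

/-- If `𝒱` is a subgroup of the unitary group of `H` containing all
`exp(c₁X₁ + ⋯ + cₙXₙ)` with `Xⱼ` skewadjoint and `cⱼ ∈ ℝ`, then for all real `bʲ` and every
positive semidefinite symmetric real matrix `[aʲᵏ]`, the superoperator
`𝔊(A) = Σⱼ bʲ [Xⱼ, A] + Σⱼₖ aʲᵏ ({XⱼXₖ, A} − 2XⱼAXₖ)` belongs to `C(𝒱)`, the closed convex
cone generated by `{A ↦ V A V* − A : V ∈ 𝒱}`. -/
theorem gaussian_generator_mem_cone
    {H : Type*} [NormedAddCommGroup H] [InnerProductSpace ℂ H] [FiniteDimensional ℂ H]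
    (𝒱 : Set (H →L[ℂ] H))
    (hsub : 𝒱 ⊆ unitary (H →L[ℂ] H))
    (h1 : (1 : H →L[ℂ] H) ∈ 𝒱)
    (hmul : ∀ v ∈ 𝒱, ∀ w ∈ 𝒱, v * w ∈ 𝒱)
    (hstar : ∀ v ∈ 𝒱, star v ∈ 𝒱)
    (n : ℕ) (X : Fin n → (H →L[ℂ] H))
    (hskew : ∀ j, star (X j) = -X j)
    (hexp : ∀ c : Fin n → ℝ, NormedSpace.exp (∑ j, c j • X j) ∈ 𝒱)
    (b : Fin n → ℝ) (a : Matrix (Fin n) (Fin n) ℝ)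
    (hsymm : a.IsSymm) (hpos : a.PosSemidef) :
    ∃ T ∈ closure (coneGen
        {T | ∃ V ∈ 𝒱, T = conjCLM V - ContinuousLinearMap.id ℂ (H →L[ℂ] H)}),
      ∀ A : H →L[ℂ] H,
        T A = (∑ j, b j • (X j * A - A * X j))
          + ∑ j, ∑ k, a j k •
              (X j * X k * A + A * (X j * X k) - 2 • (X j * A * X k)) :=
  gaussian_generator_mem_cone_general 𝒱 n X hskew hexp b a hpos
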